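/- Let d ≥ 1 and let 0 < a < n be coprime integers, and let (b_1,…,b_r) be a list of integers with every b_i ≥ 2 whose Hirzebruch–Jung continued fraction equals dn²/(dna−1). Then the Hirzebruch–Jung continued fraction of (b_1+1, b_2,…,b_r, 2) equals d(n+a)²/(d(n+a)a − 1), and the Hirzebruch–Jung continued fraction of (2, b_1,…,b_{r−1}, b_r+1) equals d(2n−a)²/(d(2n−a)n − 1). Moreover 0 < a < n+a with gcd(a, n+a) = 1, and 0 < n < 2n−a with gcd(n, 2n−a) = 1, so both new lists are again T-chains with the same parameter d. -/
import Mathlib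


/-- Hirzebruch–Jung continued fraction: `hjcf [b₁,…,b_r] = b₁ - 1/(b₂ - 1/(⋯ - 1/b_r))`.
(With the convention `hjcf [] = 0`, so that `hjcf [b] = b` since `1/0 = 0`.) -/
def hjcf : List ℚ → ℚ
  | [] => 0
  | b :: l => b - 1 / hjcf l

/-- Hirzebruch–Jung continued fraction of a list of integers. -/
def hjcfZ (b : List ℤ) : ℚ := hjcf (b.map (fun x => (x : ℚ)))

/-- The operation `(b₁,…,b_r) ↦ (b₁+1, b₂,…,b_r, 2)`. -/
def addLeft (b : List ℤ) : List ℤ := b.modifyHead (· + 1) ++ [2]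

/-- The operation `(b₁,…,b_r) ↦ (2, b₁,…,b_{r-1}, b_r+1)`. -/
def addRight (b : List ℤ) : List ℤ := 2 :: (b.reverse.modifyHead (· + 1)).reverse

def Mx (x : ℤ) : Matrix (Fin 2) (Fin 2) ℤ := !![x, -1; 1, 0]

def Tm (l : List ℤ) : Matrix (Fin 2) (Fin 2) ℤ := (l.map Mx).prod

lemma Tm_nil : Tm [] = 1 := rfl

lemma Tm_cons (x : ℤ) (l : List ℤ) : Tm (x :: l) = Mx x * Tm l := by
  simp [Tm, List.prod_cons]

lemma Tm_append (l m : List ℤ) : Tm (l ++ m) = Tm l * Tm m := by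
  simp [Tm, List.prod_append]

lemma mul_ent (A B : Matrix (Fin 2) (Fin 2) ℤ) (i j : Fin 2) :
    (A * B) i j = A i 0 * B 0 j + A i 1 * B 1 j := by
  rw [Matrix.mul_apply, Fin.sum_univ_two]

lemma Mx00 (x : ℤ) : Mx x 0 0 = x := rfl
lemma Mx01 (x : ℤ) : Mx x 0 1 = -1 := rfl
lemma Mx10 (x : ℤ) : Mx x 1 0 = 1 := rfl
lemma Mx11 (x : ℤ) : Mx x 1 1 = 0 := rfl

lemma Tm_det (l : List ℤ) : Tm l 0 0 * Tm l 1 1 - Tm l 0 1 * Tm l 1 0 = 1 := by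
  induction l with
  | nil => simp [Tm_nil, Matrix.one_apply]
  | cons x t ih =>
    rw [Tm_cons]
    simp only [mul_ent, Mx00, Mx01, Mx10, Mx11]
    ring_nf
    ring_nf at ih
    linarith [ih]

lemma hjcfZ_nil : hjcfZ [] = 0 := rfl

lemma hjcfZ_cons (x : ℤ) (l : List ℤ) : hjcfZ (x :: l) = x - 1 / hjcfZ l := by
  simp only [hjcfZ, List.map_cons, hjcf]
  congr 2

lemma Tm_single (y : ℤ) : Tm [y] = Mx y := by simp [Tm]

lemma ent00 (x : ℤ) (l : List ℤ) : Tm (x::l) 0 0 = x * Tm l 0 0 - Tm l 1 0 := by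
  rw [Tm_cons, mul_ent, Mx00, Mx01]; ring
lemma ent10 (x : ℤ) (l : List ℤ) : Tm (x::l) 1 0 = Tm l 0 0 := by
  rw [Tm_cons, mul_ent, Mx10, Mx11]; ring
lemma ent01 (x : ℤ) (l : List ℤ) : Tm (x::l) 0 1 = x * Tm l 0 1 - Tm l 1 1 := by
  rw [Tm_cons, mul_ent, Mx00, Mx01]; ring
lemma ent11 (x : ℤ) (l : List ℤ) : Tm (x::l) 1 1 = Tm l 0 1 := by
  rw [Tm_cons, mul_ent, Mx10, Mx11]; ring

lemma entR0 (l : List ℤ) (y : ℤ) (i : Fin 2) :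
    Tm (l ++ [y]) i 0 = y * Tm l i 0 + Tm l i 1 := by
  rw [Tm_append, Tm_single, mul_ent, Mx00, Mx10]; ring
lemma entR1 (l : List ℤ) (y : ℤ) (i : Fin 2) :
    Tm (l ++ [y]) i 1 = -Tm l i 0 := by
  rw [Tm_append, Tm_single, mul_ent, Mx01, Mx11]; ring


lemma main (l : List ℤ) (hl : l ≠ []) (h2 : ∀ x ∈ l, 2 ≤ x) :
    hjcfZ l = (Tm l 0 0 : ℚ) / (Tm l 1 0 : ℚ) ∧
    0 < Tm l 1 0 ∧ Tm l 1 0 < Tm l 0 0 ∧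
    0 ≤ -Tm l 1 1 ∧ -Tm l 1 1 < -Tm l 0 1 ∧ -Tm l 0 1 < Tm l 0 0 ∧
    -Tm l 1 1 ≤ Tm l 1 0 ∧ Tm l 1 0 + -Tm l 0 1 ≤ Tm l 0 0 + -Tm l 1 1 := by
  induction l with
  | nil => simp at hl
  | cons x t ih =>
    have hx : 2 ≤ x := h2 x (by simp)
    have e00 : Tm (x::t) 0 0 = x * Tm t 0 0 - Tm t 1 0 := by
      rw [Tm_cons, mul_ent, Mx00, Mx01]; ring
    have e10 : Tm (x::t) 1 0 = Tm t 0 0 := by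
      rw [Tm_cons, mul_ent, Mx10, Mx11]; ring
    have e01 : Tm (x::t) 0 1 = x * Tm t 0 1 - Tm t 1 1 := by
      rw [Tm_cons, mul_ent, Mx00, Mx01]; ring
    have e11 : Tm (x::t) 1 1 = Tm t 0 1 := by
      rw [Tm_cons, mul_ent, Mx10, Mx11]; ring
    rcases eq_or_ne t [] with ht | ht
    · subst ht
      have n00 : Tm ([] : List ℤ) 0 0 = 1 := by simp [Tm_nil, Matrix.one_apply]
      have n10 : Tm ([] : List ℤ) 1 0 = 0 := by simp [Tm_nil, Matrix.one_apply]
      have n01 : Tm ([] : List ℤ) 0 1 = 0 := by simp [Tm_nil, Matrix.one_apply]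
      have n11 : Tm ([] : List ℤ) 1 1 = 1 := by simp [Tm_nil, Matrix.one_apply]
      rw [n00, n10] at e00
      rw [n00] at e10
      rw [n01, n11] at e01
      rw [n01] at e11
      simp only [e00, e10, e01, e11]
      refine ⟨?_, by omega, by omega, by omega, by omega, by omega, by omega, by omega⟩
      rw [hjcfZ_cons, hjcfZ_nil]
      norm_num
    · obtain ⟨ih1, ih2, ih3, ih4, ih5, ih6, ih7, ih8⟩ :=
        ih ht (fun y hy => h2 y (by simp [hy]))
      have hp : (0 : ℚ) < (Tm t 0 0 : ℚ) := by exact_mod_cast lt_trans ih2 ih3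
      simp only [e00, e10, e01, e11]
      refine ⟨?_, ?_, ?_, ?_, ?_, ?_, ?_, ?_⟩
      · rw [hjcfZ_cons, ih1, one_div, inv_div]
        push_cast
        field_simp
      · linarith
      · nlinarith
      · linarith
      · nlinarith
      · nlinarith
      · linarith
      · nlinarith


theorem stmt2 (d n a : ℤ) (hd : 1 ≤ d) (ha : 0 < a) (han : a < n)
    (hgcd : Int.gcd a n = 1)
    (b : List ℤ) (h2 : ∀ x ∈ b, 2 ≤ x)
    (hcf : hjcfZ b = ((d * n ^ 2 : ℤ) : ℚ) / ((d * n * a - 1 : ℤ) : ℚ)) :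
    hjcfZ (addLeft b) =
        ((d * (n + a) ^ 2 : ℤ) : ℚ) / ((d * (n + a) * a - 1 : ℤ) : ℚ) ∧
      hjcfZ (addRight b) =
        ((d * (2 * n - a) ^ 2 : ℤ) : ℚ) / ((d * (2 * n - a) * n - 1 : ℤ) : ℚ) ∧
      0 < a ∧ a < n + a ∧ Int.gcd a (n + a) = 1 ∧
      0 < n ∧ n < 2 * n - a ∧ Int.gcd n (2 * n - a) = 1 := by
  have hn : 0 < n := lt_trans ha han
  have hq0 : 0 < d * n * a - 1 := by
    nlinarith [mul_nonneg (mul_nonneg (sub_nonneg.2 hd) hn.le) ha.le,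
      mul_nonneg hn.le (sub_nonneg.2 ha)]
  have hp0 : 0 < d * n ^ 2 := by positivity
  have hb : b ≠ [] := by
    intro h
    subst h
    rw [hjcfZ_nil] at hcf
    have hpos : (0:ℚ) < ((d * n ^ 2 : ℤ) : ℚ) / ((d * n * a - 1 : ℤ) : ℚ) :=
      div_pos (by exact_mod_cast hp0) (by exact_mod_cast hq0)
    rw [← hcf] at hpos
    exact lt_irrefl _ hpos
  obtain ⟨m1, m2, m3, m4, m5, m6, m7, m8⟩ := main b hb h2
  have hTq : (0:ℚ) < (Tm b 1 0 : ℚ) := by exact_mod_cast m2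
  have hq0' : (0:ℚ) < ((d * n * a - 1 : ℤ) : ℚ) := by exact_mod_cast hq0
  have hcross : Tm b 0 0 * (d * n * a - 1) = d * n ^ 2 * Tm b 1 0 := by
    have h := hcf
    rw [m1, div_eq_div_iff hTq.ne' hq0'.ne'] at h
    exact_mod_cast h
  have hdet := Tm_det b
  have hcop1 : IsCoprime (Tm b 0 0) (Tm b 1 0) :=
    ⟨Tm b 1 1, -(Tm b 0 1), by linear_combination hdet⟩
  have hcop2 : IsCoprime (d * n ^ 2) (d * n * a - 1) :=
    ⟨-(d * a * (n - a) - 1), d * n * (n - a) - 1, by ring⟩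
  have hdvd1 : Tm b 0 0 ∣ d * n ^ 2 :=
    hcop1.dvd_of_dvd_mul_right ⟨d * n * a - 1, by linarith [hcross]⟩
  have hdvd2 : d * n ^ 2 ∣ Tm b 0 0 :=
    hcop2.dvd_of_dvd_mul_right ⟨Tm b 1 0, hcross⟩
  have hP : Tm b 0 0 = d * n ^ 2 :=
    Int.dvd_antisymm (le_of_lt (lt_trans m2 m3)) (le_of_lt hp0) hdvd1 hdvd2
  have hQ : Tm b 1 0 = d * n * a - 1 := by
    rw [hP] at hcross
    exact (mul_left_cancel₀ (ne_of_gt hp0) hcross.symm)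
  have hdet2 : (-(Tm b 0 1)) * (Tm b 1 0) - Tm b 0 0 * (-(Tm b 1 1)) = 1 := by
    linear_combination hdet
  rw [hP, hQ] at hdet2
  have hPc1 : 0 < d * n * (n - a) - 1 := by nlinarith
  have hPc2 : d * n * (n - a) - 1 < d * n ^ 2 := by nlinarith
  have hcand : (d * n * (n - a) - 1) * (d * n * a - 1) - d * n ^ 2 * (d * a * (n - a) - 1) = 1 := by
    ring
  have hsub : d * n ^ 2 ∣ (-(Tm b 0 1) - (d * n * (n - a) - 1)) * (d * n * a - 1) :=
    ⟨-(Tm b 1 1) - (d * a * (n - a) - 1), by linear_combination hdet2 - hcand⟩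
  have hcop2' : IsCoprime (d * n ^ 2) (d * n * a - 1) := hcop2
  have hdvd3 : d * n ^ 2 ∣ (-(Tm b 0 1) - (d * n * (n - a) - 1)) :=
    hcop2'.dvd_of_dvd_mul_right hsub
  have hp'pos : 0 < -(Tm b 0 1) := lt_of_le_of_lt m4 m5
  have hp'lt : -(Tm b 0 1) < d * n ^ 2 := by rw [← hP]; exact m6
  have hzero : -(Tm b 0 1) - (d * n * (n - a) - 1) = 0 := by
    refine Int.eq_zero_of_abs_lt_dvd hdvd3 (abs_lt.mpr ⟨by linarith, by linarith⟩)
  have hP' : -(Tm b 0 1) = d * n * (n - a) - 1 := by linarith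
  have hQ' : -(Tm b 1 1) = d * a * (n - a) - 1 := by
    rw [hP'] at hdet2
    have h1 : d * n ^ 2 * (-(Tm b 1 1)) = d * n ^ 2 * (d * a * (n - a) - 1) := by
      linear_combination hcand - hdet2
    exact mul_left_cancel₀ (ne_of_gt hp0) h1
  -- decompose b as cons
  obtain ⟨x, t, rfl⟩ : ∃ x t, b = x :: t := by
    cases b with
    | nil => exact absurd rfl hb
    | cons x t => exact ⟨x, t, rfl⟩
  have hx2 : 2 ≤ x := h2 x (by simp)
  -- equations for Tm t
  have E1 : Tm t 0 0 = d * n * a - 1 := by rw [← ent10 x t]; exact hQ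
  have E2 : Tm t 0 1 = -(d * a * (n - a) - 1) := by
    rw [← ent11 x t]; linarith [hQ']
  have E3 : x * Tm t 0 0 - Tm t 1 0 = d * n ^ 2 := by rw [← ent00 x t]; exact hP
  have E4 : x * Tm t 0 1 - Tm t 1 1 = -(d * n * (n - a) - 1) := by
    rw [← ent01 x t]; linarith [hP']
  -- addLeft
  have hAL : addLeft (x :: t) = (x + 1) :: (t ++ [2]) := by simp [addLeft]
  have hAL2 : ∀ z ∈ (x + 1) :: (t ++ [2]), 2 ≤ z := by
    intro z hz
    rcases List.mem_cons.mp hz with rfl | hz'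
    · omega
    rcases List.mem_append.mp hz' with h | h
    · exact h2 z (by simp [h])
    · simp at h; omega
  obtain ⟨a1, -, -, -, -, -, -, -⟩ :=
    main ((x + 1) :: (t ++ [2])) (by simp) hAL2
  have f00 : Tm (t ++ [2]) 0 0 = 2 * Tm t 0 0 + Tm t 0 1 := entR0 t 2 0
  have f10 : Tm (t ++ [2]) 1 0 = 2 * Tm t 1 0 + Tm t 1 1 := entR0 t 2 1
  have gA00 : Tm ((x + 1) :: (t ++ [2])) 0 0 = d * (n + a) ^ 2 := by
    rw [ent00, f00, f10]
    linear_combination 2 * E3 + E4 + 2 * E1 + E2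
  have gA10 : Tm ((x + 1) :: (t ++ [2])) 1 0 = d * (n + a) * a - 1 := by
    rw [ent10, f00]
    linear_combination 2 * E1 + E2
  have goalL : hjcfZ (addLeft (x :: t)) =
      ((d * (n + a) ^ 2 : ℤ) : ℚ) / ((d * (n + a) * a - 1 : ℤ) : ℚ) := by
    rw [hAL, a1, gA00, gA10]
  -- addRight
  obtain ⟨u, y, hbu⟩ := (List.eq_nil_or_concat (x :: t)).resolve_left hb
  rw [List.concat_eq_append] at hbu
  have hy2 : 2 ≤ y := h2 y (by rw [hbu]; simp)
  have G1 : Tm u 0 0 = d * n * (n - a) - 1 := by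
    have h := entR1 u y 0
    rw [← hbu] at h
    linarith [hP', h]
  have G2 : Tm u 1 0 = d * a * (n - a) - 1 := by
    have h := entR1 u y 1
    rw [← hbu] at h
    linarith [hQ', h]
  have G3 : y * Tm u 0 0 + Tm u 0 1 = d * n ^ 2 := by
    have h := entR0 u y 0
    rw [← hbu] at h
    rw [← h]; exact hP
  have G4 : y * Tm u 1 0 + Tm u 1 1 = d * n * a - 1 := by
    have h := entR0 u y 1
    rw [← hbu] at h
    rw [← h]; exact hQ
  have hAR : addRight (x :: t) = 2 :: (u ++ [y + 1]) := by
    rw [addRight, hbu]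
    simp
  have hAR2 : ∀ z ∈ (2 : ℤ) :: (u ++ [y + 1]), 2 ≤ z := by
    intro z hz
    rcases List.mem_cons.mp hz with rfl | hz'
    · omega
    rcases List.mem_append.mp hz' with h | h
    · exact h2 z (by rw [hbu]; simp [h])
    · simp at h; omega
  obtain ⟨r1, -, -, -, -, -, -, -⟩ :=
    main ((2 : ℤ) :: (u ++ [y + 1])) (by simp) hAR2
  have k00 : Tm (u ++ [y + 1]) 0 0 = (y + 1) * Tm u 0 0 + Tm u 0 1 := entR0 u (y + 1) 0
  have k10 : Tm (u ++ [y + 1]) 1 0 = (y + 1) * Tm u 1 0 + Tm u 1 1 := entR0 u (y + 1) 1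
  have gB00 : Tm ((2 : ℤ) :: (u ++ [y + 1])) 0 0 = d * (2 * n - a) ^ 2 := by
    rw [ent00, k00, k10]
    linear_combination 2 * G3 + 2 * G1 - G4 - G2
  have gB10 : Tm ((2 : ℤ) :: (u ++ [y + 1])) 1 0 = d * (2 * n - a) * n - 1 := by
    rw [ent10, k00]
    linear_combination G3 + G1
  have goalR : hjcfZ (addRight (x :: t)) =
      ((d * (2 * n - a) ^ 2 : ℤ) : ℚ) / ((d * (2 * n - a) * n - 1 : ℤ) : ℚ) := by
    rw [hAR, r1, gB00, gB10]
  -- gcd facts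
  have hco : IsCoprime a n := Int.isCoprime_iff_gcd_eq_one.mpr hgcd
  have hco1 : Int.gcd a (n + a) = 1 := by
    rw [← Int.isCoprime_iff_gcd_eq_one]
    have := hco.add_mul_right_right 1
    simpa using this
  have hco2 : Int.gcd n (2 * n - a) = 1 := by
    rw [← Int.isCoprime_iff_gcd_eq_one]
    have h := (hco.symm.neg_right).add_mul_right_right 2
    have heq : 2 * n - a = -a + 2 * n := by ring
    rw [heq]
    exact h
  exact ⟨goalL, goalR, ha, by linarith, hco1, hn, by linarith, hco2⟩
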